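/- arXiv:2206.08617 — 3 statements merged into one kernel-verified Lean document; each statement's English description precedes it below -/
import Mathlib

section
/- Let g : ℝⁿ → ℝ be concave and nonnegative on a convex set X_i ⊆ ℝⁿ, let β > 0, and let u̲ < 0 < u̅ be real numbers. Then the set Z_i = {(x, v) ∈ ℝⁿ × ℝ : x ∈ X_i ∧ β·g(x)·u̲ ≤ b₀·v − αᵀx ≤ β·g(x)·u̅} is convex, where b₀ ≠ 0 and α ∈ ℝⁿ are fixed. -/
open Matrix Finset

theorem stmt_0 {n : ℕ} (g : (Fin n → ℝ) → ℝ) (Xi : Set (Fin n → ℝ))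
    (hXi : Convex ℝ Xi) (hconc : ConcaveOn ℝ Xi g) (hnonneg : ∀ x ∈ Xi, 0 ≤ g x)
    (β : ℝ) (hβ : 0 < β) (ul uu : ℝ) (hul : ul < 0) (huu : 0 < uu)
    (b₀ : ℝ) (hb₀ : b₀ ≠ 0) (α : Fin n → ℝ) :
    Convex ℝ {p : (Fin n → ℝ) × ℝ | p.1 ∈ Xi ∧
      β * g p.1 * ul ≤ b₀ * p.2 - ∑ i, α i * p.1 i ∧
      b₀ * p.2 - ∑ i, α i * p.1 i ≤ β * g p.1 * uu} := by
  rintro ⟨x, v⟩ ⟨hx, hl1, hu1⟩ ⟨y, w⟩ ⟨hy, hl2, hu2⟩ a b ha hb hab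
  have hmem : a • x + b • y ∈ Xi := hXi hx hy ha hb hab
  have hg : a * g x + b * g y ≤ g (a • x + b • y) := by
    simpa [smul_eq_mul] using hconc.2 hx hy ha hb hab
  have hsum : (∑ i, α i * (a • x + b • y) i)
      = a * (∑ i, α i * x i) + b * (∑ i, α i * y i) := by
    simp only [Pi.add_apply, Pi.smul_apply, smul_eq_mul, mul_add]
    rw [Finset.sum_add_distrib, Finset.mul_sum, Finset.mul_sum]
    congr 1 <;> exact Finset.sum_congr rfl fun i _ => by ring
  refine ⟨hmem, ?_, ?_⟩
  · have : β * g (a • x + b • y) * ul ≤ β * (a * g x + b * g y) * ul := by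
      have hβul : β * ul < 0 := mul_neg_of_pos_of_neg hβ hul
      nlinarith [mul_pos hβ huu]
    simp only [Prod.smul_snd, Prod.fst_add, Prod.snd_add, smul_eq_mul]
    calc β * g (a • x + b • y) * ul ≤ β * (a * g x + b * g y) * ul := this
      _ = a * (β * g x * ul) + b * (β * g y * ul) := by ring
      _ ≤ a * (b₀ * v - ∑ i, α i * x i) + b * (b₀ * w - ∑ i, α i * y i) := by
          gcongr
      _ = b₀ * (a * v + b * w) - ∑ i, α i * (a • x + b • y) i := by
          rw [hsum]; ring
  · have : β * (a * g x + b * g y) * uu ≤ β * g (a • x + b • y) * uu := by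
      nlinarith [mul_pos hβ huu]
    simp only [Prod.smul_snd, Prod.fst_add, Prod.snd_add, smul_eq_mul]
    calc b₀ * (a * v + b * w) - ∑ i, α i * (a • x + b • y) i
        = a * (b₀ * v - ∑ i, α i * x i) + b * (b₀ * w - ∑ i, α i * y i) := by
          rw [hsum]; ring
      _ ≤ a * (β * g x * uu) + b * (β * g y * uu) := by gcongr
      _ = β * (a * g x + b * g y) * uu := by ring
      _ ≤ β * g (a • x + b • y) * uu := this
end

section
/- Under the setting of the constraint decomposition, if x ∈ X and v ∈ ℝ satisfy (x,v) ∈ Z, then defining u = (b₀v − αᵀx)/(β g(x)) when g(x) ≠ 0 and u = 0 when g(x) = 0, one has u ∈ [u̲, u̅] and b₀v = β g(x) u + αᵀx. -/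
open Matrix Finset

/-!
Whichever orientation `U_i(x)` has, it lies in the unordered interval
`[[β g(x) u̲, β g(x) u̅]]`, the image of `[u̲, u̅]` under multiplication by `β g(x)`. Hence
`b₀ v - αᵀx = β g(x) u` for some `u ∈ [u̲, u̅]`: when `g(x) ≠ 0` this `u` is the quotient, and
when `g(x) = 0` the interval collapses to `{0}`, so `u = 0` works.
-/

lemma Set.div_mem_Icc_of_mem_uIcc_mul {𝕜 : Type*} [Field 𝕜] [LinearOrder 𝕜] [IsStrictOrderedRing 𝕜]
    {a b c r : 𝕜} (hab : a ≤ b) (hc : c ≠ 0) (hr : r ∈ Set.uIcc (c * a) (c * b)) :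
    r / c ∈ Set.Icc a b := by
  rw [← Set.image_const_mul_uIcc] at hr
  obtain ⟨u, hu, rfl⟩ := hr
  rw [mul_div_cancel_left₀ u hc, ← Set.uIcc_of_le hab]
  exact hu

lemma Set.mem_uIcc_of_mem_ite_Icc {α : Type*} [Lattice α] (p : Prop) [Decidable p] {a b r : α}
    (hr : r ∈ if p then Set.Icc a b else Set.Icc b a) : r ∈ Set.uIcc a b := by
  split_ifs at hr
  exacts [Set.Icc_subset_uIcc hr, Set.Icc_subset_uIcc' hr]

theorem stmt_4_general {n s : ℕ} (g : (Fin n → ℝ) → ℝ) (X : Fin s → Set (Fin n → ℝ))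
    (β b₀ : ℝ) (hβ : β ≠ 0) (α : Fin n → ℝ)
    (ul uu : ℝ) (hul : ul < 0) (huu : 0 < uu)
    (σ : Fin s → Bool)
    (Z : Fin s → Set ((Fin n → ℝ) × ℝ))
    (hZ : ∀ i, Z i = {p | p.1 ∈ X i ∧
      b₀ * p.2 - ∑ j, α j * p.1 j ∈
        (if σ i then Set.Icc (β * g p.1 * ul) (β * g p.1 * uu)
         else Set.Icc (β * g p.1 * uu) (β * g p.1 * ul))})
    (x : Fin n → ℝ) (v : ℝ) (hxv : (x, v) ∈ ⋃ i, Z i) :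
    (if g x ≠ 0 then (b₀ * v - ∑ j, α j * x j) / (β * g x) else 0) ∈ Set.Icc ul uu ∧
    b₀ * v = β * g x * (if g x ≠ 0 then (b₀ * v - ∑ j, α j * x j) / (β * g x) else 0)
      + ∑ j, α j * x j := by
  obtain ⟨i, hmem⟩ := Set.mem_iUnion.mp hxv
  rw [hZ] at hmem
  have hr := Set.mem_uIcc_of_mem_ite_Icc _ hmem.2
  by_cases hg : g x = 0
  · have hr0 : b₀ * v - ∑ j, α j * x j = 0 := by simpa [hg] using hr
    simp only [hg, ne_eq, not_true_eq_false, if_false]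
    exact ⟨⟨hul.le, huu.le⟩, by linarith⟩
  · have hc : β * g x ≠ 0 := mul_ne_zero hβ hg
    simp only [ne_eq, hg, not_false_eq_true, if_true]
    refine ⟨Set.div_mem_Icc_of_mem_uIcc_mul (hul.trans huu).le hc hr, ?_⟩
    rw [mul_div_cancel₀ _ hc]
    ring

theorem stmt_4 {n s : ℕ} (g : (Fin n → ℝ) → ℝ) (X : Fin s → Set (Fin n → ℝ))
    (β b₀ : ℝ) (hβ : β ≠ 0) (hb₀ : b₀ ≠ 0) (α : Fin n → ℝ)
    (ul uu : ℝ) (hul : ul < 0) (huu : 0 < uu)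
    (σ : Fin s → Bool)
    (hσpos : ∀ i, σ i = true → ∀ x ∈ X i, 0 ≤ β * g x)
    (hσneg : ∀ i, σ i = false → ∀ x ∈ X i, β * g x ≤ 0)
    (Z : Fin s → Set ((Fin n → ℝ) × ℝ))
    (hZ : ∀ i, Z i = {p | p.1 ∈ X i ∧
      b₀ * p.2 - ∑ j, α j * p.1 j ∈
        (if σ i then Set.Icc (β * g p.1 * ul) (β * g p.1 * uu)
         else Set.Icc (β * g p.1 * uu) (β * g p.1 * ul))})
    (x : Fin n → ℝ) (hx : x ∈ ⋃ i, X i) (v : ℝ) (hxv : (x, v) ∈ ⋃ i, Z i) :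
    (if g x ≠ 0 then (b₀ * v - ∑ j, α j * x j) / (β * g x) else 0) ∈ Set.Icc ul uu ∧
    b₀ * v = β * g x * (if g x ≠ 0 then (b₀ * v - ∑ j, α j * x j) / (β * g x) else 0)
      + ∑ j, α j * x j :=
  stmt_4_general g X β b₀ hβ α ul uu hul huu σ Z hZ x v hxv
end

section
/- For the system f(x,u) = Ax + g(x) b u with output h(x) = cᵀx, where cᵀAⁱb = 0 for i ∈ {0,…,n−2}, the iterated outputs satisfy h⁽ⁱ⁾(x) = cᵀAⁱx for all i ∈ {0,…,n−1} and all x, independently of the inputs applied along the trajectory. -/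
open Matrix

theorem stmt_10 {n : ℕ} (A : Matrix (Fin n) (Fin n) ℝ) (b c : Fin n → ℝ)
    (g : (Fin n → ℝ) → ℝ)
    (f : (Fin n → ℝ) → ℝ → (Fin n → ℝ)) (hf : ∀ x u, f x u = A *ᵥ x + (g x * u) • b)
    (hcb : ∀ i : ℕ, i < n - 1 → c ⬝ᵥ ((A ^ i) *ᵥ b) = 0)
    (H : ℕ → (Fin n → ℝ) → ℝ) (hH : ∀ i x, H i x = c ⬝ᵥ ((A ^ i) *ᵥ x)) :
    (∀ x, H 0 x = c ⬝ᵥ x) ∧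
    ∀ i : ℕ, i < n - 1 → ∀ x u, H (i + 1) x = H i (f x u) := by
  constructor
  · intro x
    simp [hH, Matrix.one_mulVec]
  · intro i hi x u
    rw [hH, hH, hf]
    rw [Matrix.mulVec_add, dotProduct_add, Matrix.mulVec_smul,
      dotProduct_smul, hcb i hi, smul_zero, add_zero,
      Matrix.mulVec_mulVec, ← pow_succ]
end
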